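/- Let l < k with gcd(l,k) = d, k = n d, n > 1, and a in GF(2^k)*. Then P_a(x) = x^{2^l+1}+x+a has exactly two zeros in GF(2^k) if and only if Z_n(a) != 0 and Tr_d(N^k_d(a)/Z_n(a)^2) = 0, where Tr_d is the absolute trace of GF(2^d) and N^k_d is the norm from GF(2^k) to GF(2^d). -/

import Mathlib

/-- The sequence `C_1 = C_2 = 1`, `C_{i+2}(x) = C_{i+1}(x) + x^(2^(i*l)) * C_i(x)`
(with `C_0 = 0`), evaluated at `u`. -/
def Cseq (l : ℕ) {F : Type*} [Field F] (u : F) : ℕ → F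
  | 0 => 0
  | 1 => 1
  | 2 => 1
  | (i + 3) => Cseq l u (i + 2) + u ^ (2 ^ ((i + 1) * l)) * Cseq l u (i + 1)

/-- `Z_n(x) = C_{n+1}(x) + x * C_{n-1}(x)^(2^l)`, evaluated at `u`. -/
def Zseq (l n : ℕ) {F : Type*} [Field F] (u : F) : F :=
  Cseq l u (n + 1) + u * (Cseq l u (n - 1)) ^ (2 ^ l)

/-!
Write `q = 2 ^ l` and `σ x = x ^ q`. On `GF(2 ^ k)` the map `σ` has order `n`, fixed field
`GF(2 ^ d)`, and `x * σ x * ⋯ * σ^(n-1) x` is the norm `N(x) = N^k_d(x)`.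
For a root `x` of `P_a` the recursion gives `C_{i+1} x + a C_i^q = x * σ x * ⋯ * σ^i x`;
comparing `i = n - 1` with `i = n` shows that every root satisfies `C_n x^2 + Z_n x + a C_n^q = 0`.

If `C_n ≠ 0`, the substitution `y = C_n x + C_{n+1}` identifies the roots of `P_a` with the
solutions of `y^2 + Z_n y = N(a)` in `GF(2 ^ d)`. There are two of them iff `Z_n ≠ 0` and
`N(a) / Z_n^2` lies in the image of `v ↦ v^2 + v` on `GF(2 ^ d)`; counting shows that this
image is the kernel of `Tr_d`.

If `C_n = 0`, then `Z_n = 0` and all roots have the same norm, so two roots differ by a factor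
`z ^ (q - 1)`. As `z * P_a(x z^(q-1))` is additive in `z` and vanishes at `z = 1`, `x (z+1)^(q-1)`
is then a third root.
-/

open Finset Function Polynomial

section Periodic

variable {M : Type*} [Monoid M] {p : ℕ} {x : M}

theorem isPeriodicPt_pow_iff {m : ℕ} : IsPeriodicPt (· ^ p) m x ↔ x ^ p ^ m = x := by
  rw [IsPeriodicPt, IsFixedPt, pow_iterate]

theorem pow_pow_gcd_eq_self {l k : ℕ} (hl : x ^ p ^ l = x) (hk : x ^ p ^ k = x) :
    x ^ p ^ l.gcd k = x :=
  isPeriodicPt_pow_iff.1 <| (isPeriodicPt_pow_iff.2 hl).gcd (isPeriodicPt_pow_iff.2 hk)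

theorem pow_pow_mul_eq_self {m : ℕ} (hm : x ^ p ^ m = x) (t : ℕ) : x ^ p ^ (m * t) = x :=
  isPeriodicPt_pow_iff.1 <| (isPeriodicPt_pow_iff.2 hm).mul_const t

theorem pow_pow_mod_mul {n d : ℕ} (hx : x ^ p ^ (n * d) = x) (m : ℕ) :
    x ^ p ^ (m % n * d) = x ^ p ^ (m * d) := by
  have hper : IsPeriodicPt (· ^ p ^ d) n x := by
    rwa [isPeriodicPt_pow_iff, ← pow_mul, mul_comm]
  simpa only [pow_iterate, ← pow_mul, mul_comm d] using hper.iterate_mod_apply m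

theorem pow_pow_eq_self_iff_gcd {l k : ℕ} (hk : x ^ p ^ k = x) :
    x ^ p ^ l = x ↔ x ^ p ^ l.gcd k = x := by
  refine ⟨fun hl => pow_pow_gcd_eq_self hl hk, fun h => ?_⟩
  obtain ⟨c, hc⟩ := Nat.gcd_dvd_left l k
  rw [hc]
  exact pow_pow_mul_eq_self h c

end Periodic

theorem Finset.prod_range_mul_mod {M : Type*} [CommMonoid M] {c n : ℕ} (hc : c.Coprime n)
    (f : ℕ → M) : ∏ j ∈ range n, f (c * j % n) = ∏ j ∈ range n, f j := by
  rcases n.eq_zero_or_pos with rfl | hn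
  · simp
  have hmaps : Set.MapsTo (fun j => c * j % n) (range n) (range n) :=
    fun j _ => mem_range.2 (Nat.mod_lt _ hn)
  have hinj : Set.InjOn (fun j => c * j % n) (range n) := by
    intro i hi j hj hij
    have := Nat.ModEq.cancel_left_of_coprime (Nat.coprime_comm.1 hc) hij
    rwa [Nat.ModEq, Nat.mod_eq_of_lt (mem_range.1 hi), Nat.mod_eq_of_lt (mem_range.1 hj)] at this
  exact prod_nbij _ hmaps hinj (surjOn_of_injOn_of_card_le _ hmaps hinj le_rfl) fun _ _ => rfl

theorem IsCyclic.exists_pow_eq {G : Type*} [CommGroup G] [IsCyclic G] [Finite G] (e : ℕ) {g : G}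
    (hg : g ^ (Nat.card G / (Nat.card G).gcd e) = 1) : ∃ h : G, h ^ e = g := by
  set N := Nat.card G
  have hle : (powMonoidHom e : G →* G).range ≤ (powMonoidHom (N / N.gcd e)).ker := by
    rintro _ ⟨h, rfl⟩
    rw [MonoidHom.mem_ker, powMonoidHom_apply, powMonoidHom_apply, ← pow_mul,
      ← Nat.mul_div_assoc _ (Nat.gcd_dvd_left N e), mul_comm,
      Nat.mul_div_assoc _ (Nat.gcd_dvd_right N e),
      pow_mul, pow_card_eq_one', one_pow]
  have hcard : Nat.card (powMonoidHom (N / N.gcd e) : G →* G).ker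
      ≤ Nat.card (powMonoidHom e : G →* G).range := by
    rw [IsCyclic.card_powMonoidHom_range, IsCyclic.card_powMonoidHom_ker,
      Nat.gcd_eq_right (Nat.div_dvd_of_dvd (Nat.gcd_dvd_left N e))]
  obtain ⟨h, hh⟩ := (Subgroup.eq_of_le_of_card_ge hle hcard).symm ▸ (MonoidHom.mem_ker.2 hg :
    g ∈ (powMonoidHom (N / N.gcd e) : G →* G).ker)
  exact ⟨h, hh⟩

namespace FiniteField

variable {F : Type*} [Field F] [Fintype F]

theorem exists_pow_eq_of_pow_eq_one {e : ℕ} {w : F} (hw : w ≠ 0)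
    (h : w ^ ((Fintype.card F - 1) / (Fintype.card F - 1).gcd e) = 1) : ∃ z ≠ 0, z ^ e = w := by
  obtain ⟨z, hz⟩ := IsCyclic.exists_pow_eq e (g := Units.mk0 w hw) <| by
    ext; simpa [Nat.card_units, Nat.card_eq_fintype_card] using h
  exact ⟨z, z.ne_zero, by simpa using congrArg Units.val hz⟩

theorem card_filter_pow_succ_eq_self [DecidableEq F] (m : ℕ) :
    #{v : F | v ^ (m + 1) = v} = (Fintype.card F - 1).gcd m + 1 := by
  have hker := IsCyclic.card_powMonoidHom_ker Fˣ m
  rw [Nat.card_units, Nat.card_eq_fintype_card (α := F)] at hker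
  have hunits : #{u : Fˣ | u ^ m = 1} = (Fintype.card F - 1).gcd m := by
    rw [← hker, ← Fintype.card_subtype, ← Nat.card_eq_fintype_card]
    exact Nat.card_congr (Equiv.subtypeEquivRight fun u => by simp)
  have hsplit : ({v : F | v ^ (m + 1) = v} : Finset F)
      = insert 0 (({u : Fˣ | u ^ m = 1} : Finset Fˣ).map ⟨Units.val, Units.val_injective⟩) := by
    ext v
    rcases eq_or_ne v 0 with rfl | hv
    · simp
    · simp only [mem_filter, mem_univ, true_and, mem_insert, hv, false_or, mem_map,
        Embedding.coeFn_mk]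
      constructor
      · intro h
        refine ⟨Units.mk0 v hv, ?_, rfl⟩
        ext
        simpa [pow_succ, hv] using h
      · rintro ⟨u, hu, rfl⟩
        rw [pow_succ, ← Units.val_pow_eq_pow_val, hu, Units.val_one, one_mul]
  rw [hsplit, card_insert_of_notMem (by simp), card_map, hunits]

end FiniteField

/-- `frobNorm d n` is the norm `N^k_d` from `GF(2 ^ (n * d))` to `GF(2 ^ d)`, and `frobTrace d` the
absolute trace `Tr_d` of `GF(2 ^ d)`. -/
def frobNorm {M : Type*} [CommMonoid M] (l n : ℕ) (x : M) : M :=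
  ∏ j ∈ range n, x ^ 2 ^ (j * l)

section FrobNorm

variable {M : Type*} [CommMonoid M] {l n : ℕ} (x : M)

theorem frobNorm_succ : frobNorm l (n + 1) x = frobNorm l n x * x ^ 2 ^ (n * l) :=
  prod_range_succ _ n

theorem frobNorm_succ' : frobNorm l (n + 1) x = x * frobNorm l n x ^ 2 ^ l := by
  rw [frobNorm, frobNorm, prod_range_succ', mul_comm, ← prod_pow]
  simp only [zero_mul, pow_zero, pow_one, ← pow_mul, ← pow_add, add_mul, one_mul]

theorem frobNorm_eq_pow {d : ℕ} (hd : d ≠ 0) :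
    frobNorm d n x = x ^ ((2 ^ (n * d) - 1) / (2 ^ d - 1)) := by
  have h2d : 2 ≤ 2 ^ d := Nat.le_self_pow hd 2
  rw [frobNorm, prod_pow_eq_pow_sum, mul_comm n, pow_mul, ← Nat.geomSum_eq h2d]
  simp only [mul_comm _ d, pow_mul]

theorem frobNorm_eq_frobNorm_of_gcd {d : ℕ} (hx : x ^ 2 ^ (n * d) = x) (hl : l.gcd (n * d) = d) :
    frobNorm l n x = frobNorm d n x := by
  rcases Nat.eq_zero_or_pos d with rfl | hd
  · rw [mul_zero, Nat.gcd_zero_right] at hl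
    rw [hl]
  obtain ⟨c, rfl⟩ : d ∣ l := hl ▸ Nat.gcd_dvd_left _ _
  have hc : c.Coprime n := by
    rw [mul_comm n, Nat.gcd_mul_left] at hl
    exact Nat.eq_of_mul_eq_mul_left hd (hl.trans (mul_one d).symm)
  rw [frobNorm, frobNorm, ← prod_range_mul_mod hc (fun j => x ^ 2 ^ (j * d))]
  refine prod_congr rfl fun j _ => ?_
  rw [pow_pow_mod_mul hx, show j * (d * c) = c * j * d by ring]

end FrobNorm

def frobTrace {R : Type*} [Semiring R] (d : ℕ) (t : R) : R := ∑ i ∈ range d, t ^ 2 ^ i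

theorem card_filter_frobTrace_eq_zero_le {F : Type*} [Field F] [Fintype F] [DecidableEq F]
    {d : ℕ} (hd : d ≠ 0) : #{t : F | frobTrace d t = 0} ≤ 2 ^ (d - 1) := by
  set p : F[X] := ∑ i ∈ range d, X ^ 2 ^ i
  have hcoeff : p.coeff (2 ^ (d - 1)) = 1 := by
    rw [finsetSum_coeff, sum_eq_single_of_mem (d - 1) (by simp; omega)]
    · simp
    · intro i _ hne
      rw [coeff_X_pow, if_neg fun h => hne (Nat.pow_right_injective le_rfl h.symm)]
  have hp : p ≠ 0 := fun h => by simp [h] at hcoeff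
  have hdeg : p.natDegree ≤ 2 ^ (d - 1) := by
    refine natDegree_sum_le_of_forall_le _ _ fun i hi => ?_
    rw [natDegree_X_pow]
    exact Nat.pow_le_pow_right two_pos (by simp at hi; omega)
  refine (card_le_degree_of_subset_roots fun t ht => ?_).trans hdeg
  rw [mem_roots hp, IsRoot, eval_finsetSum]
  simpa [frobTrace] using (mem_filter.1 ht).2

section CharTwo

variable {R : Type*} [CommRing R] [CharP R 2]

theorem frobTrace_sq_add_self (d : ℕ) (v : R) : frobTrace d (v ^ 2 + v) = v ^ 2 ^ d + v := by
  have hstep (i : ℕ) : (v ^ 2 + v) ^ 2 ^ i = v ^ 2 ^ (i + 1) - v ^ 2 ^ i := by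
    rw [add_pow_char_pow, CharTwo.sub_eq_add, ← pow_mul, ← pow_succ']
  rw [frobTrace, sum_congr rfl fun i _ => hstep i, sum_range_sub (fun i => v ^ 2 ^ i),
    pow_zero, pow_one, CharTwo.sub_eq_add]

theorem sq_add_self_eq_sq_add_self_iff [IsDomain R] {v w : R} :
    w ^ 2 + w = v ^ 2 + v ↔ w = v ∨ w = v + 1 := by
  have hfac : w ^ 2 + w - (v ^ 2 + v) = (w - v) * (w - (v + 1)) := by
    linear_combination (CharTwo.two_eq_zero (R := R)) * (w + v * w - v ^ 2 - v)
  rw [← sub_eq_zero, hfac, mul_eq_zero, sub_eq_zero, sub_eq_zero]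

end CharTwo

section ArtinSchreier

variable {F : Type*} [Field F] [Fintype F] [DecidableEq F] {k d : ℕ}

theorem card_filter_pow_two_pow_eq_self (hF : Fintype.card F = 2 ^ k) (hdk : d ∣ k) :
    #{v : F | v ^ 2 ^ d = v} = 2 ^ d := by
  have h := FiniteField.card_filter_pow_succ_eq_self (F := F) (2 ^ d - 1)
  rwa [hF, Nat.pow_sub_one_gcd_pow_sub_one, Nat.gcd_eq_right hdk,
    Nat.sub_add_cancel Nat.one_le_two_pow] at h

variable [CharP F 2]

theorem exists_sq_add_self_eq (hF : Fintype.card F = 2 ^ k) (hdk : d ∣ k) (hd : d ≠ 0) {t : F}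
    (ht : frobTrace d t = 0) : ∃ v, v ^ 2 ^ d = v ∧ v ^ 2 + v = t := by
  set K : Finset F := {v | v ^ 2 ^ d = v}
  have hsub : K.image (fun v => v ^ 2 + v) ⊆ ({t | frobTrace d t = 0} : Finset F) := by
    simp only [subset_iff, mem_image, mem_filter, mem_univ, true_and, K]
    rintro _ ⟨v, hv, rfl⟩
    rw [frobTrace_sq_add_self, hv, CharTwo.add_self_eq_zero]
  have hfiber : ∀ b ∈ K.image (fun v => v ^ 2 + v), #{v ∈ K | v ^ 2 + v = b} ≤ 2 := by
    simp only [mem_image]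
    rintro _ ⟨v, -, rfl⟩
    refine (card_le_card (t := {v, v + 1}) fun w hw => ?_).trans card_le_two
    simpa [sq_add_self_eq_sq_add_self_iff] using (mem_filter.1 hw).2
  have hK := card_le_mul_card_image K 2 hfiber
  rw [card_filter_pow_two_pow_eq_self hF hdk, ← Nat.two_pow_pred_mul_two (Nat.pos_of_ne_zero hd),
    mul_comm] at hK
  have heq := eq_of_subset_of_card_le hsub
    ((card_filter_frobTrace_eq_zero_le hd).trans (Nat.le_of_mul_le_mul_left hK two_pos))
  have htK : t ∈ K.image (fun v => v ^ 2 + v) := heq ▸ by simpa using ht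
  simpa [K] using htK

theorem card_filter_sq_add_self_eq_two_iff (hF : Fintype.card F = 2 ^ k) (hdk : d ∣ k)
    (hd : d ≠ 0) (t : F) :
    #{w : F | w ^ 2 ^ d = w ∧ w ^ 2 + w = t} = 2 ↔ frobTrace d t = 0 := by
  constructor
  · intro h
    obtain ⟨w, hw⟩ := card_pos.1 (h ▸ two_pos)
    simp only [mem_filter, mem_univ, true_and] at hw
    rw [← hw.2, frobTrace_sq_add_self, hw.1, CharTwo.add_self_eq_zero]
  · intro ht
    obtain ⟨v, hv, rfl⟩ := exists_sq_add_self_eq hF hdk hd ht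
    have hv1 : (v + 1) ^ 2 ^ d = v + 1 := by rw [add_pow_char_pow, hv, one_pow]
    convert card_pair (a := v) (b := v + 1) (by simp)
    ext w
    simp only [mem_filter, mem_univ, true_and, mem_insert, mem_singleton,
      sq_add_self_eq_sq_add_self_iff]
    constructor
    · exact And.right
    · rintro (rfl | rfl)
      exacts [⟨hv, .inl rfl⟩, ⟨hv1, .inr rfl⟩]

theorem card_filter_quadratic_eq_two_iff (hF : Fintype.card F = 2 ^ k) (hdk : d ∣ k)
    (hd : d ≠ 0) {b : F} (hb : b ^ 2 ^ d = b) (c : F) :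
    #{y : F | y ^ 2 ^ d = y ∧ y ^ 2 + b * y = c} = 2 ↔
      b ≠ 0 ∧ frobTrace d (c / b ^ 2) = 0 := by
  rcases eq_or_ne b 0 with rfl | hb0
  · have : #{y : F | y ^ 2 ^ d = y ∧ y ^ 2 + 0 * y = c} ≤ 1 := by
      refine card_le_one.2 fun y hy z hz => CharTwo.sq_injective ?_
      simp only [mem_filter, mem_univ, true_and, zero_mul, add_zero] at hy hz
      exact hy.2.trans hz.2.symm
    simp only [ne_eq, not_true_eq_false, false_and, iff_false]
    omega
  rw [← card_filter_sq_add_self_eq_two_iff hF hdk hd, and_iff_right hb0]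
  refine Eq.congr_left (card_equiv (Equiv.mulLeft₀ b hb0) fun w => ?_).symm
  have hb2 : b ^ 2 ≠ 0 := pow_ne_zero 2 hb0
  simp only [mem_filter, mem_univ, true_and, Equiv.mulLeft₀_apply, mul_pow, hb,
    mul_right_inj' hb0, eq_div_iff hb2]
  constructor <;> rintro ⟨h1, h2⟩ <;> refine ⟨h1, ?_⟩ <;> linear_combination h2

end ArtinSchreier

section Cseq

variable {F : Type*} [Field F] [CharP F 2] (l : ℕ) (u : F)

omit [CharP F 2] in
theorem Cseq_add_two (m : ℕ) :
    Cseq l u (m + 2) = Cseq l u (m + 1) + u ^ 2 ^ (m * l) * Cseq l u m := by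
  cases m <;> simp [Cseq]

theorem Cseq_add_two_pow (s m : ℕ) :
    Cseq l u (m + 2) ^ 2 ^ s
      = Cseq l u (m + 1) ^ 2 ^ s + u ^ 2 ^ (m * l + s) * Cseq l u m ^ 2 ^ s := by
  rw [Cseq_add_two l u, add_pow_char_pow, mul_pow, ← pow_mul, ← pow_add]

theorem Cseq_add_two_eq_frob (m : ℕ) :
    Cseq l u (m + 2) = Cseq l u (m + 1) ^ 2 ^ l + u ^ 2 ^ l * Cseq l u m ^ 2 ^ (l + l) := by
  induction m using Nat.twoStepInduction with
  | zero => simp [Cseq]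
  | one => simp [Cseq]
  | more m ih₀ ih₁ =>
    linear_combination Cseq_add_two l u (m + 2) + ih₁ + u ^ 2 ^ ((m + 2) * l) * ih₀
      - Cseq_add_two_pow l u l (m + 1) - u ^ 2 ^ l * Cseq_add_two_pow l u (l + l) m

theorem mul_Cseq_cassini (m : ℕ) :
    u * (Cseq l u (m + 2) * Cseq l u m ^ 2 ^ l + Cseq l u (m + 1) ^ (2 ^ l + 1))
      = frobNorm l (m + 1) u := by
  induction m with
  | zero => simp [Cseq, frobNorm]
  | succ m ih =>
    rw [frobNorm_succ, ← ih]
    linear_combination u * Cseq l u (m + 1) ^ 2 ^ l * Cseq_add_two l u (m + 1)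
      + u * Cseq l u (m + 2) * Cseq_add_two_pow l u l m
      + CharTwo.two_eq_zero (R := F) * (u * Cseq l u (m + 2) * Cseq l u (m + 1) ^ 2 ^ l)

theorem Cseq_mul_add_eq_frobNorm {x : F} (hx : x ^ (2 ^ l + 1) + x + u = 0) (i : ℕ) :
    Cseq l u (i + 1) * x + u * Cseq l u i ^ 2 ^ l = frobNorm l (i + 1) x := by
  induction i with
  | zero => simp [Cseq, frobNorm]
  | succ i ih =>
    rw [frobNorm_succ', ← ih, add_pow_char_pow, mul_pow, mul_pow, ← pow_mul, ← pow_add]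
    linear_combination x * Cseq_add_two_eq_frob l u i + Cseq l u (i + 1) ^ 2 ^ l * hx
      - CharTwo.two_eq_zero (R := F) * (x ^ (2 ^ l + 1) * Cseq l u (i + 1) ^ 2 ^ l)

omit [CharP F 2] in
theorem Zseq_succ (m : ℕ) : Zseq l (m + 1) u = Cseq l u (m + 2) + u * Cseq l u m ^ 2 ^ l := rfl

section Period

variable {l u} {m : ℕ}

theorem Cseq_add_two_pow_of_period (hu : u ^ 2 ^ ((m + 1) * l) = u) :
    Cseq l u (m + 2) ^ 2 ^ l = Cseq l u (m + 1) ^ 2 ^ l + u * Cseq l u m ^ 2 ^ l := by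
  rw [Cseq_add_two_pow, ← add_one_mul, hu]

theorem Zseq_eq_of_period (hu : u ^ 2 ^ ((m + 1) * l) = u) :
    Zseq l (m + 1) u = Cseq l u (m + 2) + Cseq l u (m + 2) ^ 2 ^ l + Cseq l u (m + 1) ^ 2 ^ l := by
  linear_combination Zseq_succ l u m - Cseq_add_two_pow_of_period hu
    - CharTwo.two_eq_zero (R := F) * Cseq l u (m + 1) ^ 2 ^ l

theorem Zseq_pow_of_period (hu : u ^ 2 ^ ((m + 1) * l) = u) :
    Zseq l (m + 1) u ^ 2 ^ l = Zseq l (m + 1) u := by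
  rw [Zseq_succ, add_pow_char_pow, mul_pow, ← pow_mul, ← pow_add]
  linear_combination Cseq_add_two_pow_of_period hu - Cseq_add_two_eq_frob l u m

theorem Zseq_eq_zero_of_Cseq_eq_zero (hu : u ^ 2 ^ ((m + 1) * l) = u)
    (hC : Cseq l u (m + 1) = 0) : Zseq l (m + 1) u = 0 := by
  have h₁ := Cseq_add_two l u (m + 1)
  have h₂ := Cseq_add_two_eq_frob l u (m + 1)
  have h₃ := Cseq_add_two_pow_of_period hu
  simp only [hC, mul_zero, add_zero, zero_pow (pow_ne_zero _ two_ne_zero), zero_add]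
    at h₁ h₂ h₃
  rw [Zseq_succ, ← h₃, ← h₂, h₁, CharTwo.add_self_eq_zero]

theorem Cseq_quadratic_of_root {x : F} (hx : x ^ (2 ^ l + 1) + x + u = 0)
    (hxσ : x ^ 2 ^ ((m + 1) * l) = x) :
    Cseq l u (m + 1) * x ^ 2 + Zseq l (m + 1) u * x + u * Cseq l u (m + 1) ^ 2 ^ l = 0 := by
  have h := frobNorm_succ (l := l) (n := m + 1) x
  rw [hxσ, ← Cseq_mul_add_eq_frobNorm l u hx, ← Cseq_mul_add_eq_frobNorm l u hx] at h
  linear_combination h + Zseq_succ l u m * x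
    + CharTwo.two_eq_zero (R := F) * (Cseq l u (m + 1) * x ^ 2 + u * Cseq l u m ^ 2 ^ l * x)

theorem root_iff_of_Cseq_ne_zero (hu : u ^ 2 ^ ((m + 1) * l) = u) (hu₀ : u ≠ 0)
    (hC : Cseq l u (m + 1) ≠ 0) {x : F} (hxσ : x ^ 2 ^ ((m + 1) * l) = x) :
    x ^ (2 ^ l + 1) + x + u = 0 ↔
      (Cseq l u (m + 1) * x + Cseq l u (m + 2)) ^ 2 ^ l
        = Cseq l u (m + 1) * x + Cseq l u (m + 2) ∧
      (Cseq l u (m + 1) * x + Cseq l u (m + 2)) ^ 2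
        + Zseq l (m + 1) u * (Cseq l u (m + 1) * x + Cseq l u (m + 2)) = frobNorm l (m + 1) u := by
  set C := Cseq l u (m + 1)
  set y := C * x + Cseq l u (m + 2)
  set Q := C * x ^ 2 + Zseq l (m + 1) u * x + u * C ^ 2 ^ l
  have hQ : C * Q = y ^ 2 + Zseq l (m + 1) u * y + frobNorm l (m + 1) u := by
    rw [← mul_Cseq_cassini]
    linear_combination (-Cseq l u (m + 2)) * Zseq_succ l u m - CharTwo.two_eq_zero (R := F) *
      (C * x * Cseq l u (m + 2) + Cseq l u (m + 2) ^ 2 + u * Cseq l u (m + 2) * Cseq l u m ^ 2 ^ l)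
  have hP : x * (y ^ 2 ^ l + y) = C ^ 2 ^ l * (x ^ (2 ^ l + 1) + x + u) + Q := by
    rw [add_pow_char_pow, mul_pow]
    linear_combination (-x) * Zseq_eq_of_period hu
      - CharTwo.two_eq_zero (R := F) * (C ^ 2 ^ l * x + u * C ^ 2 ^ l)
  constructor
  · intro hx
    have hx₀ : x ≠ 0 := by
      rintro rfl
      simp [hu₀] at hx
    have hQ₀ : Q = 0 := Cseq_quadratic_of_root hx hxσ
    rw [hx, mul_zero, zero_add, hQ₀, mul_eq_zero, or_iff_right hx₀, CharTwo.add_eq_zero] at hP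
    rw [hQ₀, mul_zero, eq_comm, CharTwo.add_eq_zero] at hQ
    exact ⟨hP, hQ⟩
  · rintro ⟨hy, hyN⟩
    rw [hyN, CharTwo.add_self_eq_zero, mul_eq_zero, or_iff_right hC] at hQ
    rw [hy, CharTwo.add_self_eq_zero, mul_zero, hQ, add_zero, eq_comm, mul_eq_zero,
      or_iff_right (pow_ne_zero _ hC)] at hP
    exact hP

end Period

end Cseq

section ThirdRoot

variable {F : Type*} [Field F] [CharP F 2] {l : ℕ} {a x : F}

theorem mul_eval_mul_pow_sub_one (hx : x ^ (2 ^ l + 1) + x + a = 0) (z : F) :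
    z * ((x * z ^ (2 ^ l - 1)) ^ (2 ^ l + 1) + x * z ^ (2 ^ l - 1) + a)
      = (x + a) * (z ^ 2 ^ l) ^ 2 ^ l + x * z ^ 2 ^ l + a * z := by
  have h₁ : z ^ 2 ^ l = z ^ (2 ^ l - 1) * z := (pow_sub_one_mul (by positivity) z).symm
  have h₂ : (z ^ 2 ^ l) ^ 2 ^ l = (z ^ (2 ^ l - 1)) ^ 2 ^ l * z ^ 2 ^ l := by
    rw [← mul_pow, ← h₁]
  linear_combination z * (z ^ (2 ^ l - 1)) ^ (2 ^ l + 1) * hx - (x + a) * h₂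
    - (x + (x + a) * (z ^ (2 ^ l - 1)) ^ 2 ^ l) * h₁
    - CharTwo.two_eq_zero (R := F) * (z * (z ^ (2 ^ l - 1)) ^ (2 ^ l + 1) * (x + a))

theorem third_root (hx : x ^ (2 ^ l + 1) + x + a = 0) (hx₀ : x ≠ 0) {z : F}
    (hz : z ^ 2 ^ l ≠ z)
    (hxz : (x * z ^ (2 ^ l - 1)) ^ (2 ^ l + 1) + x * z ^ (2 ^ l - 1) + a = 0) :
    (x * (z + 1) ^ (2 ^ l - 1)) ^ (2 ^ l + 1) + x * (z + 1) ^ (2 ^ l - 1) + a = 0 ∧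
      x * (z + 1) ^ (2 ^ l - 1) ≠ x ∧ x * (z + 1) ^ (2 ^ l - 1) ≠ x * z ^ (2 ^ l - 1) := by
  have hq : 2 ^ l ≠ 0 := by positivity
  have hz₀ : z ≠ 0 := by rintro rfl; exact hz (zero_pow hq)
  have hz₁ : z + 1 ≠ 0 := by
    intro h
    rw [CharTwo.add_eq_zero.1 h, one_pow] at hz
    exact hz rfl
  refine ⟨?_, ?_, ?_⟩
  · have hL := mul_eval_mul_pow_sub_one hx z
    rw [hxz, mul_zero] at hL
    have hL₁ := mul_eval_mul_pow_sub_one hx (z + 1)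
    rw [add_pow_char_pow, add_pow_char_pow, one_pow, one_pow] at hL₁
    have h : (z + 1) * ((x * (z + 1) ^ (2 ^ l - 1)) ^ (2 ^ l + 1) + x * (z + 1) ^ (2 ^ l - 1) + a)
        = 0 := by
      rw [hL₁]
      linear_combination -hL + CharTwo.two_eq_zero (R := F) * (x + a)
    exact (mul_eq_zero.1 h).resolve_left hz₁
  · intro h
    apply hz
    have h1 : (z + 1) ^ (2 ^ l - 1) = 1 := by simpa [hx₀] using h
    have := pow_sub_one_mul hq (z + 1)
    rw [h1, one_mul, add_pow_char_pow, one_pow] at this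
    exact add_right_cancel this.symm
  · intro h
    apply hz
    have h1 : (z + 1) ^ (2 ^ l - 1) = z ^ (2 ^ l - 1) := mul_left_cancel₀ hx₀ h
    have e1 := pow_sub_one_mul hq (z + 1)
    have e2 := pow_sub_one_mul hq z
    rw [add_pow_char_pow, one_pow, h1] at e1
    linear_combination z * e1 - (z + 1) * e2

end ThirdRoot

theorem card_roots_ne_two {F : Type*} [Field F] [Fintype F] [DecidableEq F] [CharP F 2]
    {k l d : ℕ} (hF : Fintype.card F = 2 ^ k) (hd : l.gcd k = d) {a : F} (ha : a ≠ 0)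
    (hS : ∀ x y : F, x ^ (2 ^ l + 1) + x + a = 0 → y ^ (2 ^ l + 1) + y + a = 0 →
      x ^ ((2 ^ k - 1) / (2 ^ d - 1)) = y ^ ((2 ^ k - 1) / (2 ^ d - 1))) :
    #{x : F | x ^ (2 ^ l + 1) + x + a = 0} ≠ 2 := by
  intro h
  obtain ⟨x, y, hxy, hR⟩ := card_eq_two.1 h
  have hroot {w : F} : w ^ (2 ^ l + 1) + w + a = 0 ↔ w = x ∨ w = y := by
    simpa using congrArg (w ∈ ·) hR
  have hx := hroot.2 (.inl rfl)
  have hy := hroot.2 (.inr rfl)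
  have hne₀ {w : F} (hw : w ^ (2 ^ l + 1) + w + a = 0) : w ≠ 0 := by
    rintro rfl
    simp [ha] at hw
  obtain ⟨z, hz₀, hz⟩ := FiniteField.exists_pow_eq_of_pow_eq_one (e := 2 ^ l - 1)
    (div_ne_zero (hne₀ hy) (hne₀ hx)) <| by
      rw [hF, Nat.pow_sub_one_gcd_pow_sub_one, Nat.gcd_comm, hd, div_pow, hS x y hx hy,
        div_self (pow_ne_zero _ (hne₀ hy))]
  have hyz : x * z ^ (2 ^ l - 1) = y := by rw [hz, mul_div_cancel₀ _ (hne₀ hx)]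
  have hzq : z ^ 2 ^ l ≠ z := by
    intro hzq
    have h₁ : z ^ (2 ^ l - 1) = 1 := by
      refine mul_right_cancel₀ hz₀ ?_
      rw [pow_sub_one_mul (by positivity), hzq, one_mul]
    rw [h₁, mul_one] at hyz
    exact hxy hyz
  obtain ⟨h₃, hne₁, hne₂⟩ := third_root hx (hne₀ hx) hzq (hyz ▸ hy)
  rcases hroot.1 h₃ with h | h
  · exact hne₁ h
  · exact hne₂ (h.trans hyz.symm)

theorem stmt_12_general (k l d n : ℕ) (hd : Nat.gcd l k = d) (hk : k = n * d)
    (F : Type*) [Field F] [Fintype F] [DecidableEq F] (hF : Fintype.card F = 2 ^ k)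
    (a : F) (ha : a ≠ 0) :
    (Finset.univ.filter (fun x : F => x ^ (2 ^ l + 1) + x + a = 0)).card = 2 ↔
      (Zseq l n a ≠ 0 ∧
        ∑ i ∈ Finset.range d,
          ((∏ j ∈ Finset.range n, a ^ (2 ^ (j * d))) / (Zseq l n a) ^ 2) ^ (2 ^ i) = 0) := by
  have : CharP F 2 := charP_of_card_eq_prime_pow hF
  have hk₀ : k ≠ 0 := by
    rintro rfl
    exact (Fintype.one_lt_card (α := F)).ne' hF
  obtain ⟨m, rfl⟩ : ∃ m, n = m + 1 := Nat.exists_eq_succ_of_ne_zero (by rintro rfl; simp_all)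
  have hd₀ : d ≠ 0 := by rintro rfl; simp_all
  subst hk
  have hpow (x : F) : x ^ 2 ^ ((m + 1) * d) = x := hF ▸ FiniteField.pow_card x
  have hσ (x : F) : x ^ 2 ^ ((m + 1) * l) = x := by
    obtain ⟨c, rfl⟩ : d ∣ l := hd ▸ Nat.gcd_dvd_left _ _
    rw [show (m + 1) * (d * c) = (m + 1) * d * c by ring]
    exact pow_pow_mul_eq_self (hpow x) c
  have hnorm (x : F) : frobNorm l (m + 1) x = x ^ ((2 ^ ((m + 1) * d) - 1) / (2 ^ d - 1)) :=
    (frobNorm_eq_frobNorm_of_gcd x (hpow x) hd).trans (frobNorm_eq_pow x hd₀)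
  change _ ↔ _ ∧ frobTrace d (frobNorm d (m + 1) a / Zseq l (m + 1) a ^ 2) = 0
  rw [← frobNorm_eq_frobNorm_of_gcd a (hpow a) hd]
  by_cases hC : Cseq l a (m + 1) = 0
  · simp only [Zseq_eq_zero_of_Cseq_eq_zero (hσ a) hC, ne_eq, not_true_eq_false, false_and,
      iff_false]
    refine card_roots_ne_two hF hd ha fun x y hx hy => ?_
    rw [← hnorm, ← hnorm, ← Cseq_mul_add_eq_frobNorm l a hx, ← Cseq_mul_add_eq_frobNorm l a hy,
      hC, zero_mul, zero_mul]
  have hfix (y : F) : y ^ 2 ^ l = y ↔ y ^ 2 ^ d = y := hd ▸ pow_pow_eq_self_iff_gcd (hpow y)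
  rw [card_equiv ((Equiv.mulLeft₀ _ hC).trans (Equiv.addRight (Cseq l a (m + 2))))
    (t := {y | y ^ 2 ^ d = y ∧ y ^ 2 + Zseq l (m + 1) a * y = frobNorm l (m + 1) a}) fun x => by
      simpa [hfix] using root_iff_of_Cseq_ne_zero (hσ a) ha hC (hσ x)]
  exact card_filter_quadratic_eq_two_iff hF (dvd_mul_left d (m + 1)) hd₀
    ((hfix _).1 (Zseq_pow_of_period (hσ a))) _

/-- `P_a` has exactly two zeros in `GF(2^k)` iff `Z_n(a) ≠ 0` and
`Tr_d(N^k_d(a)/Z_n(a)^2) = 0`, where `Tr_d` is the absolute trace of `GF(2^d)`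
and `N^k_d` the norm from `GF(2^k)` to `GF(2^d)`. -/
theorem stmt_12 (k l d n : ℕ) (hlk : l < k) (hd : Nat.gcd l k = d) (hk : k = n * d)
    (hn : 1 < n)
    (F : Type*) [Field F] [Fintype F] [DecidableEq F] (hF : Fintype.card F = 2 ^ k)
    (a : F) (ha : a ≠ 0) :
    (Finset.univ.filter (fun x : F => x ^ (2 ^ l + 1) + x + a = 0)).card = 2 ↔
      (Zseq l n a ≠ 0 ∧
        ∑ i ∈ Finset.range d,
          ((∏ j ∈ Finset.range n, a ^ (2 ^ (j * d))) / (Zseq l n a) ^ 2) ^ (2 ^ i) = 0) :=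
  stmt_12_general k l d n hd hk F hF a ha
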